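/- Suppose dim(h_i) = 2 and vertex i is ρ̃-recurrent for some density ρ̃ on h_i. Then i is ρ-transient (i.e., ∫_0^∞ p_{ii;ρ}(t) dt < ∞) for at most one density ρ on h_i. -/

import Mathlib

open Matrix MeasureTheory ComplexOrder

/-!
If `ρ₁ ≠ ρ₂` are densities on `ℂ²`, then `ρ₁ + ρ₂` is faithful: a common kernel vector would
make `ρ₁ - ρ₂` a traceless Hermitian `2 × 2` matrix with zero determinant, hence of square zero
by Cayley–Hamilton, hence zero. A faithful density dominates any density up to a constant,
`σ ≤ c (ρ₁ + ρ₂)`, and `p_{ii;ρ}(t)` is linear in `ρ` and monotone for the Loewner order because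
the semigroup is positive, so `∫ p_{ii;σ} ≤ c (∫ p_{ii;ρ₁} + ∫ p_{ii;ρ₂})`. Thus `ρ₁` and `ρ₂`
cannot both be transient when some `σ` is recurrent.
-/

/-- Embedding of an internal-state operator `ρ` at site `i` of the direct sum
`H = ⊕_{i ∈ V} h_i` (semifinite CTOQW with `h_i = ℂ^d`): this is `ρ ⊗ |i⟩⟨i|`. -/
def siteEmbed {V : Type*} [DecidableEq V] {d : ℕ} (i : V)
    (ρ : Matrix (Fin d) (Fin d) ℂ) : Matrix (V × Fin d) (V × Fin d) ℂ :=
  fun a b => if a.1 = i ∧ b.1 = i then ρ a.2 b.2 else 0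

/-- The projection `P_k = I ⊗ |k⟩⟨k|` onto the block of site `k`. -/
def siteProj {V : Type*} [DecidableEq V] (d : ℕ) (k : V) :
    Matrix (V × Fin d) (V × Fin d) ℂ :=
  Matrix.diagonal fun x => if x.1 = k then 1 else 0

/-- The `k`-th diagonal block of an operator on `⊕_{i ∈ V} ℂ^d`. -/
def siteBlock {V : Type*} {d : ℕ} (k : V) (X : Matrix (V × Fin d) (V × Fin d) ℂ) :
    Matrix (Fin d) (Fin d) ℂ :=
  fun x y => X (k, x) (k, y)

/-- Transition probability `p_{ji;ρ}(t) = Tr(e^{tL}(ρ ⊗ |i⟩⟨i|)(I ⊗ |j⟩⟨j|))` of a CTOQW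
whose semigroup `e^{tL}` is given by `T`. -/
noncomputable def transP {V : Type*} [Fintype V] [DecidableEq V] {d : ℕ}
    (T : ℝ → Matrix (V × Fin d) (V × Fin d) ℂ →ₗ[ℂ] Matrix (V × Fin d) (V × Fin d) ℂ)
    (j i : V) (ρ : Matrix (Fin d) (Fin d) ℂ) (t : ℝ) : ℝ :=
  ((T t (siteEmbed i ρ) * siteProj d j).trace).re

namespace Matrix

variable {𝕜 : Type*} [RCLike 𝕜] {n : Type*} [Fintype n]

open scoped MatrixOrder in
lemma PosSemidef.trace_mul_nonneg [DecidableEq n] {A B : Matrix n n 𝕜} (hA : A.PosSemidef)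
    (hB : B.PosSemidef) : 0 ≤ (A * B).trace := by
  obtain ⟨C, rfl⟩ := CStarAlgebra.nonneg_iff_eq_star_mul_self.mp hB.nonneg
  rw [star_eq_conjTranspose, ← Matrix.mul_assoc, trace_mul_comm]
  simpa only [Matrix.mul_assoc] using (hA.mul_mul_conjTranspose_same C).trace_nonneg

lemma eq_zero_of_isHermitian_of_trace_eq_zero_of_det_eq_zero {D : Matrix (Fin 2) (Fin 2) 𝕜}
    (hD : D.IsHermitian) (htr : D.trace = 0) (hdet : D.det = 0) : D = 0 := by
  have hsq : D * D = 0 := by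
    have hCH := D.aeval_self_charpoly
    rw [charpoly_fin_two, htr, hdet] at hCH
    simpa [sq] using hCH
  rw [← conjTranspose_mul_self_eq_zero, hD.eq, hsq]

lemma PosSemidef.mulVec_eq_zero_of_add_mulVec_eq_zero {A B : Matrix n n 𝕜} (hA : A.PosSemidef)
    (hB : B.PosSemidef) {x : n → 𝕜} (hx : (A + B) *ᵥ x = 0) : A *ᵥ x = 0 := by
  have hsum : star x ⬝ᵥ A *ᵥ x + star x ⬝ᵥ B *ᵥ x = 0 := by
    rw [← dotProduct_add, ← add_mulVec, hx, dotProduct_zero]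
  exact (hA.dotProduct_mulVec_zero_iff x).mp ((add_eq_zero_iff_of_nonneg
    (hA.dotProduct_mulVec_nonneg x) (hB.dotProduct_mulVec_nonneg x)).mp hsum).1

lemma posDef_add_of_ne_of_trace_eq_one {ρ₁ ρ₂ : Matrix (Fin 2) (Fin 2) 𝕜}
    (h₁ : ρ₁.PosSemidef) (h₂ : ρ₂.PosSemidef) (ht₁ : ρ₁.trace = 1) (ht₂ : ρ₂.trace = 1)
    (hne : ρ₁ ≠ ρ₂) : (ρ₁ + ρ₂).PosDef := by
  rw [(h₁.add h₂).posDef_iff_det_ne_zero]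
  intro hdet
  obtain ⟨x, hx, hker⟩ := exists_mulVec_eq_zero_iff.mpr hdet
  have hker₁ := h₁.mulVec_eq_zero_of_add_mulVec_eq_zero h₂ hker
  have hker₂ := h₂.mulVec_eq_zero_of_add_mulVec_eq_zero h₁ (add_comm ρ₁ ρ₂ ▸ hker)
  refine hne (sub_eq_zero.mp (eq_zero_of_isHermitian_of_trace_eq_zero_of_det_eq_zero
    (h₁.1.sub h₂.1) (by rw [trace_sub, ht₁, ht₂, sub_self]) ?_))
  exact exists_mulVec_eq_zero_iff.mp ⟨x, hx, by rw [sub_mulVec, hker₁, hker₂, sub_zero]⟩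

open scoped MatrixOrder in
lemma PosDef.exists_smul_sub_posSemidef [DecidableEq n] {A B : Matrix n n 𝕜} (hA : A.PosDef)
    (hB : B.IsHermitian) : ∃ c : ℝ, 0 ≤ c ∧ (c • A - B).PosSemidef := by
  rcases subsingleton_or_nontrivial (Matrix n n 𝕜) with _ | _
  · exact ⟨0, le_rfl, by simpa [Subsingleton.elim (_ - B) 0] using PosSemidef.zero⟩
  obtain ⟨r, hr, hrA⟩ : ∃ r > 0, algebraMap ℝ _ r ≤ A :=
    (CFC.exists_pos_algebraMap_le_iff hA.1.isSelfAdjoint).2 fun x hx =>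
      (isStrictlyPositive_iff_posDef.mpr hA).spectrum_pos hx
  obtain ⟨s, hs⟩ :=
    (isCompact_iff_compactSpace.mpr inferInstance : IsCompact (spectrum ℝ B)).bddAbove
  have hBs : B ≤ algebraMap ℝ _ (max s 0) :=
    (le_algebraMap_iff_spectrum_le hB.isSelfAdjoint).2 fun x hx => (hs hx).trans (le_max_left _ _)
  refine ⟨max s 0 / r, by positivity, ?_⟩
  rw [← le_iff]
  calc B ≤ algebraMap ℝ _ (max s 0) := hBs
    _ = (max s 0 / r) • algebraMap ℝ _ r := by
        rw [Algebra.smul_def, ← map_mul, div_mul_cancel₀ _ hr.ne']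
    _ ≤ (max s 0 / r) • A := smul_le_smul_of_nonneg_left hrA (by positivity)

end Matrix

section CTOQW

open scoped Kronecker ENNReal

variable {V : Type*} [DecidableEq V] {d : ℕ}

lemma siteEmbed_eq_kronecker (i : V) (ρ : Matrix (Fin d) (Fin d) ℂ) :
    siteEmbed i ρ = single i i 1 ⊗ₖ ρ := by
  ext ⟨a, x⟩ ⟨b, y⟩
  simp only [siteEmbed, kronecker_apply, single, of_apply]
  grind

lemma siteProj_posSemidef (k : V) : (siteProj (V := V) d k).PosSemidef :=
  posSemidef_diagonal_iff.mpr fun x => by split_ifs <;> simp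

variable [Fintype V]

lemma siteEmbed_posSemidef (i : V) {ρ : Matrix (Fin d) (Fin d) ℂ} (hρ : ρ.PosSemidef) :
    (siteEmbed i ρ).PosSemidef := by
  rw [siteEmbed_eq_kronecker, ← diagonal_single]
  exact (posSemidef_diagonal_iff.mpr fun k => by
    rcases eq_or_ne k i with rfl | h <;> simp [*]).kronecker hρ

variable (T : ℝ → Matrix (V × Fin d) (V × Fin d) ℂ →ₗ[ℂ] Matrix (V × Fin d) (V × Fin d) ℂ)

lemma transP_add (j i : V) (ρ τ : Matrix (Fin d) (Fin d) ℂ) (t : ℝ) :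
    transP T j i (ρ + τ) t = transP T j i ρ t + transP T j i τ t := by
  simp only [transP, siteEmbed_eq_kronecker, kronecker_add, map_add, Matrix.add_mul, trace_add,
    Complex.add_re]

lemma transP_smul (j i : V) (c : ℝ) (ρ : Matrix (Fin d) (Fin d) ℂ) (t : ℝ) :
    transP T j i (c • ρ) t = c * transP T j i ρ t := by
  simp only [transP, siteEmbed_eq_kronecker, kronecker_smul, ← Complex.coe_smul, map_smul,
    Matrix.smul_mul, trace_smul, smul_eq_mul, Complex.re_ofReal_mul]

variable {T}

lemma transP_nonneg (hTpos : ∀ t : ℝ, 0 ≤ t → ∀ X, X.PosSemidef → (T t X).PosSemidef)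
    (j i : V) {ρ : Matrix (Fin d) (Fin d) ℂ} (hρ : ρ.PosSemidef) {t : ℝ} (ht : 0 ≤ t) :
    0 ≤ transP T j i ρ t :=
  (Complex.nonneg_iff.mp ((hTpos t ht _ (siteEmbed_posSemidef i hρ)).trace_mul_nonneg
    (siteProj_posSemidef j))).1

lemma continuous_transP (hTcont : ∀ X, Continuous fun t => T t X) (j i : V)
    (ρ : Matrix (Fin d) (Fin d) ℂ) : Continuous (transP T j i ρ) :=
  Complex.continuous_re.comp ((hTcont _).matrix_mul continuous_const).matrix_trace

/-- `∫_0^∞ p_{ji;ρ}(t) dt`: vertex `i` is `ρ`-recurrent iff `greenFun T i i ρ = ⊤`. -/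
noncomputable def greenFun
    (T : ℝ → Matrix (V × Fin d) (V × Fin d) ℂ →ₗ[ℂ] Matrix (V × Fin d) (V × Fin d) ℂ) (j i : V)
    (ρ : Matrix (Fin d) (Fin d) ℂ) : ℝ≥0∞ :=
  ∫⁻ t in Set.Ici 0, ENNReal.ofReal (transP T j i ρ t)

lemma greenFun_mono (hTpos : ∀ t : ℝ, 0 ≤ t → ∀ X, X.PosSemidef → (T t X).PosSemidef)
    (j i : V) {σ τ : Matrix (Fin d) (Fin d) ℂ} (h : (τ - σ).PosSemidef) :
    greenFun T j i σ ≤ greenFun T j i τ := by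
  refine setLIntegral_mono_ae' measurableSet_Ici (Filter.Eventually.of_forall fun t ht => ?_)
  have hgap := transP_nonneg hTpos j i h ht
  rw [← sub_add_cancel τ σ, transP_add]
  exact ENNReal.ofReal_le_ofReal (le_add_of_nonneg_left hgap)

lemma greenFun_smul (j i : V) {c : ℝ} (hc : 0 ≤ c) (ρ : Matrix (Fin d) (Fin d) ℂ) :
    greenFun T j i (c • ρ) = ENNReal.ofReal c * greenFun T j i ρ := by
  simp only [greenFun, transP_smul, ENNReal.ofReal_mul hc]
  exact lintegral_const_mul' _ _ ENNReal.ofReal_ne_top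

lemma greenFun_add (hTpos : ∀ t : ℝ, 0 ≤ t → ∀ X, X.PosSemidef → (T t X).PosSemidef)
    (hTcont : ∀ X, Continuous fun t => T t X) (j i : V) {ρ τ : Matrix (Fin d) (Fin d) ℂ}
    (hρ : ρ.PosSemidef) (hτ : τ.PosSemidef) :
    greenFun T j i (ρ + τ) = greenFun T j i ρ + greenFun T j i τ := by
  rw [greenFun, greenFun, greenFun,
    ← lintegral_add_left (continuous_transP hTcont j i ρ).measurable.ennreal_ofReal]
  refine setLIntegral_congr_fun measurableSet_Ici fun t ht => ?_
  rw [transP_add,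
    ENNReal.ofReal_add (transP_nonneg hTpos j i hρ ht) (transP_nonneg hTpos j i hτ ht)]

end CTOQW

theorem ctoqw_dim_two_at_most_one_transient_density_general {V : Type*} [Fintype V] [DecidableEq V]
    (T : ℝ → Matrix (V × Fin 2) (V × Fin 2) ℂ →ₗ[ℂ] Matrix (V × Fin 2) (V × Fin 2) ℂ)
    (hTpos : ∀ t : ℝ, 0 ≤ t → ∀ X, X.PosSemidef → (T t X).PosSemidef)
    (hTcont : ∀ X, Continuous fun t => T t X)
    (i : V) (σ : Matrix (Fin 2) (Fin 2) ℂ) (hσ : σ.PosSemidef)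
    (hrec : (∫⁻ t in Set.Ici (0 : ℝ), ENNReal.ofReal (transP T i i σ t)) = ⊤) :
    ∀ ρ₁ ρ₂ : Matrix (Fin 2) (Fin 2) ℂ,
      ρ₁.PosSemidef → ρ₁.trace = 1 → ρ₂.PosSemidef → ρ₂.trace = 1 →
      (∫⁻ t in Set.Ici (0 : ℝ), ENNReal.ofReal (transP T i i ρ₁ t)) ≠ ⊤ →
      (∫⁻ t in Set.Ici (0 : ℝ), ENNReal.ofReal (transP T i i ρ₂ t)) ≠ ⊤ →
      ρ₁ = ρ₂ := by
  intro ρ₁ ρ₂ h₁ ht₁ h₂ ht₂ hfin₁ hfin₂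
  by_contra hne
  obtain ⟨c, hc, hσc⟩ :=
    (posDef_add_of_ne_of_trace_eq_one h₁ h₂ ht₁ ht₂ hne).exists_smul_sub_posSemidef hσ.1
  have hle := greenFun_mono hTpos i i hσc
  rw [greenFun_smul i i hc, greenFun_add hTpos hTcont i i h₁ h₂,
    show greenFun T i i σ = ⊤ from hrec, top_le_iff] at hle
  exact ENNReal.mul_ne_top ENNReal.ofReal_ne_top (ENNReal.add_ne_top.mpr ⟨hfin₁, hfin₂⟩) hle

/-- If `dim h_i = 2` and the vertex `i` is recurrent for some density, then `i` is
transient for at most one density `ρ`. -/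
theorem ctoqw_dim_two_at_most_one_transient_density {V : Type*} [Fintype V] [DecidableEq V]
    (T : ℝ → Matrix (V × Fin 2) (V × Fin 2) ℂ →ₗ[ℂ] Matrix (V × Fin 2) (V × Fin 2) ℂ)
    (hT0 : T 0 = LinearMap.id)
    (hTsemi : ∀ s t : ℝ, 0 ≤ s → 0 ≤ t → T (s + t) = (T s).comp (T t))
    (hTpos : ∀ t : ℝ, 0 ≤ t → ∀ X, X.PosSemidef → (T t X).PosSemidef)
    (hTtr : ∀ t : ℝ, 0 ≤ t → ∀ X, (T t X).trace = X.trace)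
    (hTcont : ∀ X, Continuous fun t => T t X)
    (i : V) (σ : Matrix (Fin 2) (Fin 2) ℂ) (hσ : σ.PosSemidef) (hσ1 : σ.trace = 1)
    (hrec : (∫⁻ t in Set.Ici (0 : ℝ), ENNReal.ofReal (transP T i i σ t)) = ⊤) :
    ∀ ρ₁ ρ₂ : Matrix (Fin 2) (Fin 2) ℂ,
      ρ₁.PosSemidef → ρ₁.trace = 1 → ρ₂.PosSemidef → ρ₂.trace = 1 →
      (∫⁻ t in Set.Ici (0 : ℝ), ENNReal.ofReal (transP T i i ρ₁ t)) ≠ ⊤ →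
      (∫⁻ t in Set.Ici (0 : ℝ), ENNReal.ofReal (transP T i i ρ₂ t)) ≠ ⊤ →
      ρ₁ = ρ₂ :=
  ctoqw_dim_two_at_most_one_transient_density_general T hTpos hTcont i σ hσ hrec
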